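/- Conversely, given probabilities pₖ ≥ 0 with ∑ₖ pₖ = 1, symmetries Sₖ ∈ S_ψ, and local operators N_q with N_q g|ψ⟩ = 0 satisfying (1/r)∑ₖ pₖ Sₖ† h†h Sₖ + g†(∑_q N_q†N_q)g = g†g with r = ‖h|ψ⟩‖²/‖g|ψ⟩‖², the operators Mₖ = √(pₖ) (‖g|ψ⟩‖/‖h|ψ⟩‖) h Sₖ g⁻¹ together with the N_q satisfy the completeness relation ∑ₖ Mₖ†Mₖ + ∑_q N_q†N_q = 𝟙 and each Mₖ maps g|ψ⟩ to √(pₖ)(‖g|ψ⟩‖/‖h|ψ⟩‖) h|ψ⟩, i.e., the corresponding CPTP map deterministically transforms g|ψ⟩ into h|ψ⟩ (up to normalization). -/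

import Mathlib

open Matrix BigOperators

noncomputable def tensorOp {n : ℕ} {d : Fin n → ℕ}
    (N : ∀ i, Matrix (Fin (d i)) (Fin (d i)) ℂ) :
    Matrix (∀ i, Fin (d i)) (∀ i, Fin (d i)) ℂ :=
  fun f g => ∏ i, N i (f i) (g i)

noncomputable def nsq {V : Type*} [Fintype V] (ψ : V → ℂ) : ℝ :=
  ∑ f, Complex.normSq (ψ f)

lemma tensorOp_mul {n : ℕ} {d : Fin n → ℕ}
    (A B : ∀ i, Matrix (Fin (d i)) (Fin (d i)) ℂ) :
    tensorOp (fun i => A i * B i) = tensorOp A * tensorOp B := by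
  ext f g
  simp only [tensorOp, Matrix.mul_apply]
  rw [Fintype.prod_sum]
  exact Finset.sum_congr rfl fun x _ => Finset.prod_mul_distrib

lemma tensorOp_one {n : ℕ} {d : Fin n → ℕ} :
    tensorOp (fun i : Fin n => (1 : Matrix (Fin (d i)) (Fin (d i)) ℂ)) = 1 := by
  ext f g
  simp only [tensorOp, Matrix.one_apply]
  by_cases hfg : f = g
  · subst hfg; simp
  · rw [if_neg hfg]
    obtain ⟨i, hi⟩ := Function.ne_iff.mp hfg
    exact Finset.prod_eq_zero (Finset.mem_univ i) (by simp [hi])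

lemma nsq_pos {V : Type*} [Fintype V] {v : V → ℂ} (hv : v ≠ 0) : 0 < nsq v := by
  have h0 : 0 ≤ nsq v := Finset.sum_nonneg fun f _ => Complex.normSq_nonneg _
  rcases h0.lt_or_eq with h | h
  · exact h
  · exfalso
    apply hv
    funext f
    have := (Finset.sum_eq_zero_iff_of_nonneg
      (fun f _ => Complex.normSq_nonneg (v f))).mp h.symm f (Finset.mem_univ f)
    exact Complex.normSq_eq_zero.mp this

lemma isUnit_tensorOp {n : ℕ} {d : Fin n → ℕ}
    (A : ∀ i, Matrix (Fin (d i)) (Fin (d i)) ℂ) (hA : ∀ i, IsUnit (A i)) :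
    IsUnit (tensorOp A) := by
  classical
  have h1 : tensorOp A * tensorOp (fun i => (A i)⁻¹) = 1 := by
    rw [← tensorOp_mul]
    have : (fun i => A i * (A i)⁻¹) = fun _ => 1 := by
      funext i
      exact Matrix.mul_nonsing_inv _ ((Matrix.isUnit_iff_isUnit_det _).mp (hA i))
    rw [this, tensorOp_one]
  have hdet : IsUnit (tensorOp A).det := by
    have := congrArg Matrix.det h1
    rw [Matrix.det_mul, Matrix.det_one] at this
    exact IsUnit.of_mul_eq_one _ this
  exact (Matrix.isUnit_iff_isUnit_det _).mpr hdet

/-- Sufficiency part of Theorem 2: given probabilities `pₖ`, stabilizer elements `Sₖ`, and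
local operators `N_q` annihilating `g|ψ⟩` satisfying
`(1/r) ∑ₖ pₖ Sₖ† H Sₖ + g† (∑_q N_q† N_q) g = G`, the operators
`Mₖ = √pₖ (‖gψ‖/‖hψ‖) h Sₖ g⁻¹` together with the `N_q` satisfy the completeness relation
and each `Mₖ` maps `g|ψ⟩` to `√pₖ (‖gψ‖/‖hψ‖) h|ψ⟩`. -/
theorem sep_transformation_sufficient {n : ℕ} {d : Fin n → ℕ}
    (ψ : (∀ i, Fin (d i)) → ℂ)
    (g h : ∀ i, Matrix (Fin (d i)) (Fin (d i)) ℂ)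
    (hg : ∀ i, IsUnit (g i)) (hh : ∀ i, IsUnit (h i))
    (hgψ : tensorOp g *ᵥ ψ ≠ 0) (hhψ : tensorOp h *ᵥ ψ ≠ 0)
    (K L : ℕ) (p : Fin K → ℝ)
    (S : Fin K → ∀ i, Matrix (Fin (d i)) (Fin (d i)) ℂ)
    (N : Fin L → ∀ i, Matrix (Fin (d i)) (Fin (d i)) ℂ)
    (hp : ∀ k, 0 ≤ p k) (hps : ∑ k, p k = 1)
    (hS : ∀ k, (∀ i, IsUnit (S k i)) ∧ tensorOp (S k) *ᵥ ψ = ψ)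
    (hN : ∀ q, tensorOp (N q) *ᵥ (tensorOp g *ᵥ ψ) = 0)
    (heq : (((nsq (tensorOp h *ᵥ ψ) / nsq (tensorOp g *ᵥ ψ) : ℝ) : ℂ))⁻¹ •
          ∑ k, (p k : ℂ) • ((tensorOp (S k))ᴴ * ((tensorOp h)ᴴ * tensorOp h) * tensorOp (S k))
        + (tensorOp g)ᴴ * (∑ q, (tensorOp (N q))ᴴ * tensorOp (N q)) * tensorOp g
        = (tensorOp g)ᴴ * tensorOp g) :
    (∑ k, ((((Real.sqrt (p k) * (Real.sqrt (nsq (tensorOp g *ᵥ ψ)) /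
              Real.sqrt (nsq (tensorOp h *ᵥ ψ)))) : ℝ) : ℂ) •
          (tensorOp h * tensorOp (S k) * (tensorOp g)⁻¹))ᴴ *
        ((((Real.sqrt (p k) * (Real.sqrt (nsq (tensorOp g *ᵥ ψ)) /
              Real.sqrt (nsq (tensorOp h *ᵥ ψ)))) : ℝ) : ℂ) •
          (tensorOp h * tensorOp (S k) * (tensorOp g)⁻¹))
      + ∑ q, (tensorOp (N q))ᴴ * tensorOp (N q) = 1) ∧
    ∀ k, ((((Real.sqrt (p k) * (Real.sqrt (nsq (tensorOp g *ᵥ ψ)) /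
              Real.sqrt (nsq (tensorOp h *ᵥ ψ)))) : ℝ) : ℂ) •
          (tensorOp h * tensorOp (S k) * (tensorOp g)⁻¹)) *ᵥ (tensorOp g *ᵥ ψ)
        = ((((Real.sqrt (p k) * (Real.sqrt (nsq (tensorOp g *ᵥ ψ)) /
              Real.sqrt (nsq (tensorOp h *ᵥ ψ)))) : ℝ) : ℂ)) • (tensorOp h *ᵥ ψ) := by
  classical
  set G := tensorOp g with hGdef
  set H := tensorOp h with hHdef
  set a := nsq (G *ᵥ ψ) with hadef
  set b := nsq (H *ᵥ ψ) with hbdef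
  have ha : 0 < a := nsq_pos hgψ
  have hb : 0 < b := nsq_pos hhψ
  have hGu : IsUnit G := isUnit_tensorOp g hg
  have hGd : IsUnit G.det := (Matrix.isUnit_iff_isUnit_det _).mp hGu
  have hGG : G * G⁻¹ = 1 := Matrix.mul_nonsing_inv _ hGd
  have hGG' : G⁻¹ * G = 1 := Matrix.nonsing_inv_mul _ hGd
  -- constant square computation
  have hc2 : ∀ k, (((Real.sqrt (p k) * (Real.sqrt a / Real.sqrt b)) : ℝ) : ℂ)
      * star (((Real.sqrt (p k) * (Real.sqrt a / Real.sqrt b)) : ℝ) : ℂ)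
      = ((p k * (a / b) : ℝ) : ℂ) := by
    intro k
    rw [Complex.star_def, Complex.conj_ofReal, ← Complex.ofReal_mul]
    congr 1
    rw [mul_mul_mul_comm, Real.mul_self_sqrt (hp k), div_mul_div_comm,
      Real.mul_self_sqrt ha.le, Real.mul_self_sqrt hb.le]
  -- rewrite heq
  have hinv : (((b / a : ℝ) : ℂ))⁻¹ = ((a / b : ℝ) : ℂ) := by
    push_cast
    rw [inv_div]
  set T := ∑ k, (p k : ℂ) • ((tensorOp (S k))ᴴ * (Hᴴ * H) * tensorOp (S k)) with hTdef
  set X := ∑ q, (tensorOp (N q))ᴴ * tensorOp (N q) with hXdef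
  have heq' : ((a / b : ℝ) : ℂ) • T = Gᴴ * G - Gᴴ * X * G := by
    rw [← hinv]
    rw [eq_sub_iff_add_eq]
    exact heq
  refine ⟨?_, ?_⟩
  · have hsum : (∑ k, ((((Real.sqrt (p k) * (Real.sqrt a / Real.sqrt b)) : ℝ) : ℂ) •
          (H * tensorOp (S k) * G⁻¹))ᴴ *
        ((((Real.sqrt (p k) * (Real.sqrt a / Real.sqrt b)) : ℝ) : ℂ) •
          (H * tensorOp (S k) * G⁻¹)))
        = (G⁻¹)ᴴ * (((a / b : ℝ) : ℂ) • T) * G⁻¹ := by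
      rw [hTdef, Finset.smul_sum, Matrix.mul_sum, Finset.sum_mul]
      refine Finset.sum_congr rfl fun k _ => ?_
      simp only [Matrix.conjTranspose_smul, Matrix.smul_mul, Matrix.mul_smul, smul_smul]
      rw [hc2 k]
      congr 1
      · push_cast; ring
      · simp only [Matrix.conjTranspose_mul, Matrix.mul_assoc]
    rw [hsum, heq']
    have h1 : (G⁻¹)ᴴ * (Gᴴ * G) * G⁻¹ = 1 := by
      rw [← Matrix.mul_assoc, ← Matrix.conjTranspose_mul, hGG, Matrix.conjTranspose_one,
        Matrix.one_mul, hGG]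
    have h2 : (G⁻¹)ᴴ * (Gᴴ * X * G) * G⁻¹ = X := by
      calc (G⁻¹)ᴴ * (Gᴴ * X * G) * G⁻¹ = ((G⁻¹)ᴴ * Gᴴ) * (X * (G * G⁻¹)) := by
            simp only [Matrix.mul_assoc]
        _ = X := by
            rw [← Matrix.conjTranspose_mul, hGG, Matrix.conjTranspose_one]
            simp
    rw [Matrix.mul_sub, Matrix.sub_mul, h1, h2]
    simp
  · intro k
    rw [Matrix.smul_mulVec]
    congr 1
    rw [Matrix.mulVec_mulVec, Matrix.mul_assoc, Matrix.mul_assoc, hGG', Matrix.mul_one,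
      ← Matrix.mulVec_mulVec, (hS k).2]
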